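/- Let M be the 8×8 integer matrix with rows (0,2,−2,0,0,0,0,1), (−2,0,1,0,0,0,0,−1), (2,−1,0,1,−1,0,0,1), (0,0,−1,0,1,0,0,−1), (0,0,1,−1,0,1,−1,1), (0,0,0,0,−1,0,1,−1), (0,0,0,0,1,−1,0,1), (−1,1,−1,1,−1,1,−1,0). Let e_1,…,e_8 denote the standard basis vectors of ℤ^8, and set v_1 = e_4, v_2 = e_1, v_3 = −e_1 − e_2 − e_3, v_4 = e_2 − e_4; let P be the 8×4 integer matrix whose columns are v_1, v_2, v_3, v_4. Then (i) M is alternating, i.e. Mᵀ = −M, and (ii) Pᵀ M P equals the 4×4 block matrix [[0, D], [−D, 0]] where D = diag(1, 2), i.e. the matrix with rows (0,0,1,0), (0,0,0,2), (−1,0,0,0), (0,−2,0,0). -/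
import Mathlib

open Matrix

/-- The alternating Riemann form of the ppav with ten vanishing thetanulls, in a basis
`e₁, …, e₈` of the `E₈` lattice, restricts on the sublattice spanned by
`v₁ = e₄`, `v₂ = e₁`, `v₃ = -e₁ - e₂ - e₃`, `v₄ = e₂ - e₄` to an alternating form
of type `(1,2)`. -/
theorem riemann_form_restriction_type_one_two
    (M : Matrix (Fin 8) (Fin 8) ℤ)
    (hM : M = !![0,2,-2,0,0,0,0,1;
                 -2,0,1,0,0,0,0,-1;
                 2,-1,0,1,-1,0,0,1;
                 0,0,-1,0,1,0,0,-1;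
                 0,0,1,-1,0,1,-1,1;
                 0,0,0,0,-1,0,1,-1;
                 0,0,0,0,1,-1,0,1;
                 -1,1,-1,1,-1,1,-1,0])
    (e : Fin 8 → Fin 8 → ℤ) (he : ∀ i, e i = Pi.single i 1)
    (v : Fin 4 → Fin 8 → ℤ)
    (hv0 : v 0 = e 3) (hv1 : v 1 = e 0)
    (hv2 : v 2 = -(e 0) - e 1 - e 2) (hv3 : v 3 = e 1 - e 3)
    (P : Matrix (Fin 8) (Fin 4) ℤ) (hP : P = Matrix.of fun i j => v j i) :
    Mᵀ = -M ∧
    Pᵀ * M * P = !![0,0,1,0;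
                    0,0,0,2;
                    -1,0,0,0;
                    0,-2,0,0] := by
  have hP' : P = !![0,1,-1,0;
                    0,0,-1,1;
                    0,0,-1,0;
                    1,0,0,-1;
                    0,0,0,0;
                    0,0,0,0;
                    0,0,0,0;
                    0,0,0,0] := by
    subst hP
    ext i j
    fin_cases i <;> fin_cases j <;>
      simp [hv0, hv1, hv2, hv3, he, Pi.single_apply] <;> rfl
  subst hM hP'
  constructor <;> decide
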